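/- In a real normed space whose unit ball is strictly convex, for linearly independent vectors x, y, the functions h₊(t) := ‖x/‖x‖ + (y+t·x)/‖y+t·x‖‖ and h₋(t) := ‖x/‖x‖ − (y+t·x)/‖y+t·x‖‖ are strictly monotone (increasing, respectively decreasing) on ℝ. -/

import Mathlib

/-!
Write `f t = ‖y + t • x‖`. Strict convexity of the unit ball makes the triangle inequality strict
for linearly independent vectors, so `f` is strictly convex, and it is `‖x‖`-Lipschitz. The identity
`‖x‖⁻¹ • x + (f t)⁻¹ • (y + t • x) = (f t)⁻¹ • (y + σ t • x)` with `σ t = t + f t / ‖x‖` gives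
`h₊ t = f (σ t) / f t = 1 + ‖x‖⁻¹ * slope f t (σ t)`, and likewise
`h₋ t = 1 - ‖x‖⁻¹ * slope f (τ t) t` with `τ t = t - f t / ‖x‖`. The Lipschitz bound makes `σ` and
`τ` monotone, and the slope of a strictly convex function over such a moving interval strictly
increases.
-/

open Metric Set

section

variable {K M : Type*} [Field K] [AddCommGroup M] [Module K M] {x y : M}

theorem LinearIndependent.add_smul_ne_zero (h : LinearIndependent K ![x, y]) (t : K) :
    y + t • x ≠ 0 := fun h0 =>
  one_ne_zero (LinearIndependent.pair_iff.1 h t 1 (by rw [one_smul, add_comm, h0])).2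

theorem LinearIndependent.pair_add_smul (h : LinearIndependent K ![x, y]) {a b : K}
    (hab : a ≠ b) : LinearIndependent K ![y + a • x, y + b • x] := by
  refine LinearIndependent.pair_iff.2 fun s t hst => ?_
  obtain ⟨hx, hy⟩ := LinearIndependent.pair_iff.1 h (s * a + t * b) (s + t)
    (by rw [← hst]; module)
  have ht : t * (b - a) = 0 := by linear_combination hx - a * hy
  have ht : t = 0 := (mul_eq_zero.1 ht).resolve_right (sub_ne_zero.2 hab.symm)
  exact ⟨by linear_combination hy - ht, ht⟩

end

section

variable {E : Type*} [NormedAddCommGroup E] [NormedSpace ℝ E] {x y : E}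

theorem StrictConvexSpace.of_combo_mem_interior_unitClosedBall
    (h : ∀ u v : E, ‖u‖ ≤ 1 → ‖v‖ ≤ 1 → u ≠ v → ∀ t : ℝ, 0 < t → t < 1 →
      t • u + (1 - t) • v ∈ interior (closedBall (0 : E) 1)) :
    StrictConvexSpace ℝ E := by
  refine StrictConvexSpace.of_strictConvex_unitClosedBall ℝ fun u hu v hv huv a b ha hb hab => ?_
  obtain rfl : b = 1 - a := by linarith
  exact h u v (mem_closedBall_zero_iff.1 hu) (mem_closedBall_zero_iff.1 hv) huv a ha (by linarith)

theorem strictConvexOn_norm_add_smul [StrictConvexSpace ℝ E] (h : LinearIndependent ℝ ![x, y]) :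
    StrictConvexOn ℝ univ fun t : ℝ => ‖y + t • x‖ := by
  refine ⟨convex_univ, fun a _ b _ hab p q hp hq hpq => ?_⟩
  have hline : y + (p • a + q • b) • x = p • (y + a • x) + q • (y + b • x) := by
    linear_combination (norm := module) -hpq • y
  have hray : ¬SameRay ℝ (p • (y + a • x)) (q • (y + b • x)) := fun hs => by
    have hs := (hs.pos_smul_left (inv_pos.2 hp)).pos_smul_right (inv_pos.2 hq)
    rw [inv_smul_smul₀ hp.ne', inv_smul_smul₀ hq.ne'] at hs
    exact sameRay_or_sameRay_neg_iff_not_linearIndependent.1 (.inl hs) (h.pair_add_smul hab)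
  calc ‖y + (p • a + q • b) • x‖ < ‖p • (y + a • x)‖ + ‖q • (y + b • x)‖ :=
        hline ▸ norm_add_lt_of_not_sameRay hray
    _ = p • ‖y + a • x‖ + q • ‖y + b • x‖ := by
        rw [norm_smul_of_nonneg hp.le, norm_smul_of_nonneg hq.le, smul_eq_mul, smul_eq_mul]

theorem norm_add_smul_le (s t : ℝ) : ‖y + s • x‖ ≤ ‖y + t • x‖ + |s - t| * ‖x‖ := by
  calc ‖y + s • x‖ = ‖(y + t • x) + (s - t) • x‖ := by rw [sub_smul]; abel_nf
    _ ≤ ‖y + t • x‖ + |s - t| * ‖x‖ := by rw [← Real.norm_eq_abs, ← norm_smul]; exact norm_add_le _ _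

theorem monotone_add_norm_add_smul_div (hx : x ≠ 0) :
    Monotone fun t : ℝ => t + ‖y + t • x‖ / ‖x‖ := by
  intro s t hst
  have key : (‖y + s • x‖ - ‖y + t • x‖) / ‖x‖ ≤ t - s := by
    rw [div_le_iff₀ (norm_pos_iff.2 hx), ← abs_of_nonneg (sub_nonneg.2 hst), abs_sub_comm]
    linarith [norm_add_smul_le (x := x) (y := y) s t]
  rw [sub_div] at key
  dsimp only
  linarith

theorem monotone_sub_norm_add_smul_div (hx : x ≠ 0) :
    Monotone fun t : ℝ => t - ‖y + t • x‖ / ‖x‖ := by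
  intro s t hst
  have key : (‖y + t • x‖ - ‖y + s • x‖) / ‖x‖ ≤ t - s := by
    rw [div_le_iff₀ (norm_pos_iff.2 hx), ← abs_of_nonneg (sub_nonneg.2 hst)]
    linarith [norm_add_smul_le (x := x) (y := y) t s]
  rw [sub_div] at key
  dsimp only
  linarith

theorem norm_inv_norm_smul_add_inv_norm_smul_eq (hx : x ≠ 0) {t : ℝ} (hz : y + t • x ≠ 0) :
    ‖‖x‖⁻¹ • x + ‖y + t • x‖⁻¹ • (y + t • x)‖ =
      1 + ‖x‖⁻¹ * slope (fun s : ℝ => ‖y + s • x‖) t (t + ‖y + t • x‖ / ‖x‖) := by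
  have hm := norm_ne_zero_iff.2 hx
  have hf := norm_ne_zero_iff.2 hz
  set σ := t + ‖y + t • x‖ / ‖x‖ with hσ
  have hvec : ‖x‖⁻¹ • x + ‖y + t • x‖⁻¹ • (y + t • x) = ‖y + t • x‖⁻¹ • (y + σ • x) := by
    rw [hσ]; match_scalars <;> field_simp; ring
  rw [hvec, norm_smul_of_nonneg (by positivity), slope_def_field, hσ, add_sub_cancel_left]
  field_simp
  ring

theorem norm_inv_norm_smul_sub_inv_norm_smul_eq (hx : x ≠ 0) {t : ℝ} (hz : y + t • x ≠ 0) :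
    ‖‖x‖⁻¹ • x - ‖y + t • x‖⁻¹ • (y + t • x)‖ =
      1 - ‖x‖⁻¹ * slope (fun s : ℝ => ‖y + s • x‖) (t - ‖y + t • x‖ / ‖x‖) t := by
  have hm := norm_ne_zero_iff.2 hx
  have hf := norm_ne_zero_iff.2 hz
  set τ := t - ‖y + t • x‖ / ‖x‖ with hτ
  have hvec : ‖x‖⁻¹ • x - ‖y + t • x‖⁻¹ • (y + t • x) = -(‖y + t • x‖⁻¹ • (y + τ • x)) := by
    rw [hτ]; match_scalars <;> field_simp; ring
  rw [hvec, norm_neg, norm_smul_of_nonneg (by positivity), slope_def_field, hτ, sub_sub_cancel]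
  field_simp
  ring

end

section

variable {f g : ℝ → ℝ}

theorem StrictConvexOn.strictMono_slope_right (hf : StrictConvexOn ℝ univ f) (hg : Monotone g)
    (hlt : ∀ t, t < g t) : StrictMono fun t => slope f t (g t) := by
  intro s t hst
  calc slope f s (g s) ≤ slope f s (g t) :=
        hf.convexOn.slope_mono trivial ⟨trivial, (hlt s).ne'⟩
          ⟨trivial, (hst.trans (hlt t)).ne'⟩ (hg hst.le)
    _ < slope f t (g t) := by
        simp only [slope_comm f _ (g t), slope_def_field]
        exact hf.secant_strict_mono trivial trivial trivial (hst.trans (hlt t)).ne (hlt t).ne hst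

theorem StrictConvexOn.strictMono_slope_left (hf : StrictConvexOn ℝ univ f) (hg : Monotone g)
    (hlt : ∀ t, g t < t) : StrictMono fun t => slope f (g t) t := by
  intro s t hst
  calc slope f (g s) s < slope f (g s) t := by
        simp only [slope_def_field]
        exact hf.secant_strict_mono trivial trivial trivial (hlt s).ne' ((hlt s).trans hst).ne' hst
    _ ≤ slope f (g t) t := by
        simp only [slope_comm f _ t]
        exact hf.convexOn.slope_mono trivial ⟨trivial, ((hlt s).trans hst).ne⟩
          ⟨trivial, (hlt t).ne⟩ (hg hst.le)

end

theorem stmt_12 {X : Type*} [NormedAddCommGroup X] [NormedSpace ℝ X]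
    (hsc : ∀ u v : X, ‖u‖ ≤ 1 → ‖v‖ ≤ 1 → u ≠ v → ∀ t : ℝ, 0 < t → t < 1 →
      t • u + (1 - t) • v ∈ interior (Metric.closedBall (0 : X) 1))
    (x y : X) (h : LinearIndependent ℝ ![x, y]) :
    StrictMono (fun t : ℝ => ‖(‖x‖)⁻¹ • x + (‖y + t • x‖)⁻¹ • (y + t • x)‖) ∧
    StrictAnti (fun t : ℝ => ‖(‖x‖)⁻¹ • x - (‖y + t • x‖)⁻¹ • (y + t • x)‖) := by
  have := StrictConvexSpace.of_combo_mem_interior_unitClosedBall hsc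
  have hx : x ≠ 0 := h.ne_zero 0
  have hf := strictConvexOn_norm_add_smul h
  have hstep (t : ℝ) : 0 < ‖y + t • x‖ / ‖x‖ :=
    div_pos (norm_pos_iff.2 (h.add_smul_ne_zero t)) (norm_pos_iff.2 hx)
  have hσ := hf.strictMono_slope_right (monotone_add_norm_add_smul_div hx)
    fun t => lt_add_of_pos_right t (hstep t)
  have hτ := hf.strictMono_slope_left (monotone_sub_norm_add_smul_div hx)
    fun t => sub_lt_self t (hstep t)
  refine ⟨fun s t hst => ?_, fun s t hst => ?_⟩
  · simp only [norm_inv_norm_smul_add_inv_norm_smul_eq hx (h.add_smul_ne_zero _)]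
    gcongr
    exact hσ hst
  · simp only [norm_inv_norm_smul_sub_inv_norm_smul_eq hx (h.add_smul_ne_zero _)]
    gcongr
    exact hτ hst
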